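/- Let ψ₁, ψ₂, ψ₃ ∈ ℝ⁴ be linearly independent real unit vectors and let r be the 3×3 real symmetric matrix with entries r_{ij} = ψᵢᵀ J ψ_j. Suppose r_{ii} < 0 for i = 1,2,3, r_{ii}r_{jj} − r_{ij}² < 0 for all i ≠ j, and det(r) < 0. Then for every probability vector (p₁, p₂, p₃) with all pᵢ > 0, the mixture ρ = Σᵢ pᵢ ψᵢψᵢᵀ satisfies C(ρ) = Σᵢ pᵢ |r_{ii}| = Σᵢ pᵢ C(ψᵢψᵢᵀ). -/

import Mathlib

/-!
Write `ρ = K Kᵀ` with `K = Ψᵀ diag(√p)`. As `ρ` and `J` are real, `ρρ̃ = (ρJ)²`, and moving `K`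
to the other side shows that `(ρJ)²` has the eigenvalues of `S²` together with an extra `0`,
where `S = KᵀJK = diag(√p) r diag(√p)`. The symmetric matrix `S` is congruent to `r`, so
`det S < 0` and it has a negative `2×2` principal minor; hence its eigenvalues are `x, y > 0 > z`.
Since `x + y + z = tr S = ∑ pᵢ rᵢᵢ < 0`, `|z|` is the largest of `0, x, y, |z|`, and
`C(ρ) = |z| - x - y = -tr S = ∑ pᵢ |rᵢᵢ|`. A pure state is the case of a single vector.
-/

open Matrix Polynomial

noncomputable section

/-- `J = σ_y ⊗ σ_y` as a complex 4×4 matrix (standard product basis). -/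
def Jc : Matrix (Fin 4) (Fin 4) ℂ :=
  !![0, 0, 0, -1; 0, 0, 1, 0; 0, 1, 0, 0; -1, 0, 0, 0]

/-- `J = σ_y ⊗ σ_y` as a real 4×4 matrix (standard product basis). -/
def Jr : Matrix (Fin 4) (Fin 4) ℝ :=
  !![0, 0, 0, -1; 0, 0, 1, 0; 0, 1, 0, 0; -1, 0, 0, 0]

/-- The spin-flipped matrix `ρ̃ = J ρ̄ J`. -/
def spinFlip (ρ : Matrix (Fin 4) (Fin 4) ℂ) : Matrix (Fin 4) (Fin 4) ℂ :=
  Jc * ρ.map (starRingEnd ℂ) * Jc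

/-- The concurrence of a two-qubit density matrix `ρ`:
`max (0, √μ₁ − √μ₂ − √μ₃ − √μ₄)` where `μ₁ ≥ μ₂ ≥ μ₃ ≥ μ₄` are the (real,
nonnegative) eigenvalues of `ρ ρ̃` listed with multiplicity. -/
def concurrence (ρ : Matrix (Fin 4) (Fin 4) ℂ) : ℝ :=
  let l : List ℝ :=
    (((ρ * spinFlip ρ).charpoly.roots.map Complex.re).sort (· ≤ ·))
  max 0 (Real.sqrt (l.getD 3 0) - Real.sqrt (l.getD 2 0) -
    Real.sqrt (l.getD 1 0) - Real.sqrt (l.getD 0 0))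

/-- The (complex) density matrix of the pure state given by a real 4-vector `ψ`,
namely `ψ ψᵀ`. -/
def pureState (ψ : Fin 4 → ℝ) : Matrix (Fin 4) (Fin 4) ℂ :=
  (Matrix.vecMulVec ψ ψ).map Complex.ofReal

end

theorem Matrix.charpoly_sq_mul_mul_of_le {R m ι : Type*} [CommRing R] [Fintype m] [DecidableEq m]
    [Fintype ι] [DecidableEq ι] (A : Matrix m ι R) (B : Matrix ι m R) (J : Matrix m m R)
    (h : Fintype.card ι ≤ Fintype.card m) :
    ((A * B * J) ^ 2).charpoly =
      X ^ (Fintype.card m - Fintype.card ι) * ((B * J * A) ^ 2).charpoly := by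
  have hAB : (A * B * J) ^ 2 = A * (B * J * A * B * J) := by simp only [sq, Matrix.mul_assoc]
  have hBA : (B * J * A) ^ 2 = B * J * A * B * J * A := by simp only [sq, Matrix.mul_assoc]
  rw [hAB, hBA, charpoly_mul_comm_of_le _ _ h]

theorem Matrix.IsHermitian.charpoly_pow {𝕜 n : Type*} [RCLike 𝕜] [Fintype n] [DecidableEq n]
    {S : Matrix n n 𝕜} (hS : S.IsHermitian) (k : ℕ) :
    (S ^ k).charpoly = ∏ i, (X - C ((hS.eigenvalues i : 𝕜) ^ k)) := by
  conv_lhs => rw [hS.spectral_theorem, ← map_pow, Unitary.conjStarAlgAut_apply,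
    charpoly_mul_comm, ← Matrix.mul_assoc]
  simp [diagonal_pow, charpoly_diagonal]

theorem Matrix.IsHermitian.exists_eigenvalues_pos_of_minor_neg {n : Type*} [Fintype n]
    [DecidableEq n] {S : Matrix n n ℝ} (hS : S.IsHermitian) {i j : n} (h : S i i * S j j - S i j ^ 2 < 0) :
    ∃ k, 0 < hS.eigenvalues k := by
  by_contra! hneg
  have hnegS : (-S).PosSemidef := by
    have : -S = (hS.eigenvectorUnitary : Matrix n n ℝ) * diagonal (fun k ↦ -hS.eigenvalues k) *
        (hS.eigenvectorUnitary : Matrix n n ℝ)ᴴ := by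
      conv_lhs => rw [hS.spectral_theorem, Unitary.conjStarAlgAut_apply]
      simp [← diagonal_neg, Matrix.star_eq_conjTranspose]
    rw [this]
    exact (PosSemidef.diagonal fun k ↦ neg_nonneg.mpr (hneg k)).mul_mul_conjTranspose_same _
  have hminor := (hnegS.submatrix ![i, j]).det_nonneg
  have hji : S j i = S i j := by simpa using congrFun (congrFun hS.eq i) j
  rw [det_fin_two] at hminor
  simp only [submatrix_apply, Matrix.neg_apply, cons_val_zero, cons_val_one, cons_val_fin_one,
    mul_neg, neg_mul, neg_neg, hji] at hminor
  nlinarith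

theorem exists_pos_pos_neg_of_mul_neg {a b c : ℝ} (hprod : a * b * c < 0)
    (hpos : 0 < a ∨ 0 < b ∨ 0 < c) :
    ∃ x y z : ℝ, 0 < x ∧ 0 < y ∧ z < 0 ∧ ({a, b, c} : Multiset ℝ) = {x, y, z} := by
  have ha : a ≠ 0 := by rintro rfl; simp at hprod
  have hb : b ≠ 0 := by rintro rfl; simp at hprod
  have hc : c ≠ 0 := by rintro rfl; simp at hprod
  rcases ha.lt_or_gt with ha | ha <;> rcases hb.lt_or_gt with hb | hb <;>
    rcases hc.lt_or_gt with hc | hc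
  · exact absurd hpos (by push Not; exact ⟨ha.le, hb.le, hc.le⟩)
  · nlinarith [mul_pos_of_neg_of_neg ha hb]
  · nlinarith [mul_pos_of_neg_of_neg ha hc]
  · exact ⟨b, c, a, hb, hc, ha, by
      simp only [Multiset.insert_eq_cons, ← Multiset.singleton_add]; abel⟩
  · nlinarith [mul_pos_of_neg_of_neg hb hc]
  · exact ⟨a, c, b, ha, hc, hb, by
      simp only [Multiset.insert_eq_cons, ← Multiset.singleton_add]; abel⟩
  · exact ⟨a, b, c, ha, hb, hc, rfl⟩
  · nlinarith [mul_pos (mul_pos ha hb) hc]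

theorem Matrix.IsHermitian.exists_charpoly_sq_eq_of_det_neg {S : Matrix (Fin 3) (Fin 3) ℝ}
    (hS : S.IsHermitian) (hdet : S.det < 0) {i j : Fin 3} (hminor : S i i * S j j - S i j ^ 2 < 0) :
    ∃ x y z : ℝ, 0 < x ∧ 0 < y ∧ z < 0 ∧ x + y + z = S.trace ∧
      (S ^ 2).charpoly = (X - C (x ^ 2)) * (X - C (y ^ 2)) * (X - C (z ^ 2)) := by
  -- `det S < 0` leaves one or three negative eigenvalues; the negative minor excludes three.
  have hprod : hS.eigenvalues 0 * hS.eigenvalues 1 * hS.eigenvalues 2 < 0 := by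
    simpa [hS.det_eq_prod_eigenvalues, Fin.prod_univ_three] using hdet
  have hpos : 0 < hS.eigenvalues 0 ∨ 0 < hS.eigenvalues 1 ∨ 0 < hS.eigenvalues 2 := by
    obtain ⟨k, hk⟩ := hS.exists_eigenvalues_pos_of_minor_neg hminor
    fin_cases k <;> [exact .inl hk; exact .inr (.inl hk); exact .inr (.inr hk)]
  obtain ⟨x, y, z, hx, hy, hz, he⟩ := exists_pos_pos_neg_of_mul_neg hprod hpos
  refine ⟨x, y, z, hx, hy, hz, ?_, ?_⟩
  · simpa [hS.trace_eq_sum_eigenvalues, Fin.sum_univ_three, add_assoc] using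
      (congrArg Multiset.sum he).symm
  · have hmap := congrArg (fun s ↦ (s.map fun t ↦ X - C (t ^ 2)).prod) he
    simp only [Multiset.insert_eq_cons, Multiset.map_cons, Multiset.map_singleton,
      Multiset.prod_cons, Multiset.prod_singleton] at hmap
    rw [hS.charpoly_pow, Fin.prod_univ_three]
    simpa [mul_assoc] using hmap

theorem map_ofReal_eq_mapMatrix {n : Type*} [Fintype n] [DecidableEq n] (M : Matrix n n ℝ) :
    M.map Complex.ofReal = Complex.ofRealHom.mapMatrix M := rfl

theorem Jc_eq_map_ofReal : Jc = Jr.map Complex.ofReal := by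
  ext i j
  fin_cases i <;> fin_cases j <;> simp [Jc, Jr]

theorem mul_spinFlip_map_ofReal (ρ : Matrix (Fin 4) (Fin 4) ℝ) :
    ρ.map Complex.ofReal * spinFlip (ρ.map Complex.ofReal) =
      ((ρ * Jr) ^ 2).map Complex.ofReal := by
  have hconj : (ρ.map Complex.ofReal).map (starRingEnd ℂ) = ρ.map Complex.ofReal := by
    ext; simp
  rw [spinFlip, hconj, Jc_eq_map_ofReal]
  simp only [map_ofReal_eq_mapMatrix, ← map_mul, sq, Matrix.mul_assoc]

theorem concurrence_map_ofReal {ρ : Matrix (Fin 4) (Fin 4) ℝ} {x y z : ℝ} (hx : 0 ≤ x) (hy : 0 ≤ y)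
    (hxyz : x + y ≤ z)
    (h : ((ρ * Jr) ^ 2).charpoly = X * (X - C (x ^ 2)) * (X - C (y ^ 2)) * (X - C (z ^ 2))) :
    concurrence (ρ.map Complex.ofReal) = z - x - y := by
  wlog hxy : x ≤ y generalizing x y
  · have := this hy hx (by linarith) (by rw [h]; ring) (le_of_not_ge hxy)
    linarith
  have hroots : (ρ.map Complex.ofReal * spinFlip (ρ.map Complex.ofReal)).charpoly.roots =
      ({0, ↑(x ^ 2), ↑(y ^ 2), ↑(z ^ 2)} : Multiset ℂ) := by
    rw [mul_spinFlip_map_ofReal, map_ofReal_eq_mapMatrix, RingHom.mapMatrix_apply, charpoly_map, h,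
      ← roots_multiset_prod_X_sub_C ({0, ↑(x ^ 2), ↑(y ^ 2), ↑(z ^ 2)} : Multiset ℂ)]
    congr 1
    simp [Multiset.insert_eq_cons, mul_assoc]
  have hsort : ((({0, ↑(x ^ 2), ↑(y ^ 2), ↑(z ^ 2)} : Multiset ℂ).map Complex.re).sort (· ≤ ·)) =
      [0, x ^ 2, y ^ 2, z ^ 2] := by
    have hz : y ^ 2 ≤ z ^ 2 := by nlinarith
    have hre : (({0, ↑(x ^ 2), ↑(y ^ 2), ↑(z ^ 2)} : Multiset ℂ).map Complex.re) =
        ↑[0, x ^ 2, y ^ 2, z ^ 2] := rfl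
    rw [hre, Multiset.coe_sort, List.mergeSort_eq_self]
    have hxy2 : x ^ 2 ≤ y ^ 2 := pow_le_pow_left₀ hx hxy 2
    simp [List.pairwise_cons, hxy2, hz, hxy2.trans hz, sq_nonneg]
  rw [concurrence, hroots, hsort]
  show max 0 (√(z ^ 2) - √(y ^ 2) - √(x ^ 2) - √0) = z - x - y
  rw [Real.sqrt_sq hx, Real.sqrt_sq hy, Real.sqrt_sq (by linarith), Real.sqrt_zero,
    max_eq_right (by linarith)]
  ring

theorem Jr_isHermitian : Jr.IsHermitian := by
  ext i j
  fin_cases i <;> fin_cases j <;> simp [Jr]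

theorem dotProduct_Jr_mulVec_comm (u v : Fin 4 → ℝ) : u ⬝ᵥ Jr *ᵥ v = v ⬝ᵥ Jr *ᵥ u := by
  rw [dotProduct_mulVec, ← mulVec_transpose, dotProduct_comm,
    ← conjTranspose_eq_transpose_of_trivial, Jr_isHermitian.eq]

section Gram

variable {ι : Type*} [Fintype ι] [DecidableEq ι] (ψ : ι → Fin 4 → ℝ)

theorem sum_smul_pureState_eq_map {p : ι → ℝ} (hp : ∀ i, 0 ≤ p i) :
    ∑ i, p i • pureState (ψ i) =
      ((of ψ)ᵀ * diagonal (fun i ↦ √(p i)) * ((of ψ)ᵀ * diagonal (fun i ↦ √(p i)))ᵀ).map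
        Complex.ofReal := by
  ext a b
  rw [map_apply, mul_apply, transpose_mul, diagonal_transpose]
  simp only [mul_diagonal, diagonal_mul, transpose_apply, of_apply, Matrix.sum_apply,
    Matrix.smul_apply, pureState, map_apply, vecMulVec_apply, Complex.ofReal_sum, Complex.real_smul]
  refine Finset.sum_congr rfl fun c _ ↦ ?_
  have hc : ((√(p c) * √(p c) : ℝ) : ℂ) = p c := by rw [Real.mul_self_sqrt (hp c)]
  push_cast at hc ⊢
  linear_combination (↑(ψ c a) * ↑(ψ c b) : ℂ) * hc.symm

theorem transpose_mul_Jr_mul (d : ι → ℝ) :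
    ((of ψ)ᵀ * diagonal d)ᵀ * Jr * ((of ψ)ᵀ * diagonal d) =
      diagonal d * of (fun i j ↦ ψ i ⬝ᵥ Jr *ᵥ ψ j) * diagonal d := by
  have : of ψ * Jr * (of ψ)ᵀ = of (fun i j ↦ ψ i ⬝ᵥ Jr *ᵥ ψ j) := by
    ext i j
    simp only [mul_apply, transpose_apply, of_apply, dotProduct, mulVec, Finset.sum_mul,
      Finset.mul_sum]
    rw [Finset.sum_comm]
    simp only [mul_assoc]
  rw [transpose_mul, transpose_transpose, diagonal_transpose, ← this]
  simp only [Matrix.mul_assoc]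

end Gram

theorem concurrence_pureState (φ : Fin 4 → ℝ) : concurrence (pureState φ) = |φ ⬝ᵥ Jr *ᵥ φ| := by
  set c := φ ⬝ᵥ Jr *ᵥ φ
  have hρ := sum_smul_pureState_eq_map (fun _ : Fin 1 ↦ φ) (p := 1) (fun _ ↦ zero_le_one)
  have hS := transpose_mul_Jr_mul (fun _ : Fin 1 ↦ φ) (fun _ ↦ √1)
  simp only [Fin.sum_univ_one, Pi.one_apply, one_smul, Real.sqrt_one, diagonal_one,
    Matrix.mul_one, Matrix.one_mul] at hρ hS
  have hS2 : ((of fun _ _ : Fin 1 ↦ c) ^ 2).charpoly = X - C (c ^ 2) := by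
    simp [charpoly, det_unique, sq, mul_apply]
  rw [hρ, concurrence_map_ofReal (x := 0) (y := 0) (z := |c|) le_rfl le_rfl (by simp)]
  · simp
  rw [charpoly_sq_mul_mul_of_le _ _ _ (by simp), hS, hS2, sq_abs]
  simp only [Fintype.card_fin, zero_pow two_ne_zero, map_zero, sub_zero]
  ring

theorem exists_charpoly_sq_diagonal_mul_mul_diagonal {r : Matrix (Fin 3) (Fin 3) ℝ}
    (hr : r.IsHermitian) (hdet : r.det < 0) {i j : Fin 3} (hminor : r i i * r j j - r i j ^ 2 < 0)
    {d : Fin 3 → ℝ} (hd : ∀ k, d k ≠ 0) :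
    ∃ x y z : ℝ, 0 < x ∧ 0 < y ∧ z < 0 ∧ x + y + z = ∑ k, d k ^ 2 * r k k ∧
      ((diagonal d * r * diagonal d) ^ 2).charpoly =
        (X - C (x ^ 2)) * (X - C (y ^ 2)) * (X - C (z ^ 2)) := by
  have hS : (diagonal d * r * diagonal d).IsHermitian := by
    simpa using isHermitian_conjTranspose_mul_mul (diagonal d) hr
  have hentry : ∀ k l, (diagonal d * r * diagonal d) k l = d k * d l * r k l := by
    intro k l; simp only [diagonal_mul, mul_diagonal]; ring
  have hdetS : (diagonal d * r * diagonal d).det < 0 := by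
    have hprod : 0 < (∏ k, d k) ^ 2 :=
      sq_pos_iff.2 (Finset.prod_ne_zero_iff.2 fun k _ ↦ hd k)
    rw [det_mul, det_mul, det_diagonal]
    nlinarith
  have hminorS : (diagonal d * r * diagonal d) i i * (diagonal d * r * diagonal d) j j -
      (diagonal d * r * diagonal d) i j ^ 2 < 0 := by
    simp only [hentry]
    have hdij : 0 < (d i * d j) ^ 2 := sq_pos_iff.2 (mul_ne_zero (hd i) (hd j))
    nlinarith [mul_neg_of_pos_of_neg hdij hminor]
  obtain ⟨x, y, z, hx, hy, hz, htr, hch⟩ := hS.exists_charpoly_sq_eq_of_det_neg hdetS hminorS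
  refine ⟨x, y, z, hx, hy, hz, ?_, hch⟩
  rw [htr, trace]
  simp only [diag_apply, hentry, sq]

theorem rank_three_optimal_neg_general
    (ψ : Fin 3 → Fin 4 → ℝ)
    (r : Matrix (Fin 3) (Fin 3) ℝ)
    (hr : ∀ i j, r i j = ψ i ⬝ᵥ (Jr *ᵥ ψ j))
    (hdiag : ∀ i, r i i < 0)
    (hoff : ∀ i j, i ≠ j → r i i * r j j - r i j ^ 2 < 0)
    (hdet : r.det < 0) :
    ∀ p : Fin 3 → ℝ, (∀ i, 0 < p i) → ∑ i, p i = 1 →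
      concurrence (∑ i, p i • pureState (ψ i)) = ∑ i, p i * |r i i| ∧
      ∑ i, p i * |r i i| = ∑ i, p i * concurrence (pureState (ψ i)) := by
  intro p hp _
  have hrψ : r = of fun i j ↦ ψ i ⬝ᵥ Jr *ᵥ ψ j := ext hr
  have hrH : r.IsHermitian := by
    ext i j
    simp [hrψ, dotProduct_Jr_mulVec_comm (ψ i)]
  obtain ⟨x, y, z, hx, hy, hz, htr, hch⟩ := exists_charpoly_sq_diagonal_mul_mul_diagonal hrH hdet
    (hoff 0 1 (by decide)) (d := fun i ↦ √(p i)) fun i ↦ (Real.sqrt_pos.2 (hp i)).ne'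
  set K := (of ψ)ᵀ * diagonal fun i ↦ √(p i)
  have hK := charpoly_sq_mul_mul_of_le K Kᵀ Jr (by simp)
  rw [transpose_mul_Jr_mul, ← hrψ, hch] at hK
  have hsum : ∑ i, p i * |r i i| = -(x + y + z) := by
    simp [htr, Real.sq_sqrt (hp _).le, abs_of_neg (hdiag _)]
  have hpos : 0 < ∑ i, p i * |r i i| :=
    Finset.sum_pos (fun i _ ↦ mul_pos (hp i) (abs_pos.2 (hdiag i).ne)) Finset.univ_nonempty
  refine ⟨?_, by simp [concurrence_pureState, hr]⟩
  rw [sum_smul_pureState_eq_map ψ fun i ↦ (hp i).le, concurrence_map_ofReal (z := -z) hx.le hy.le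
    (by linarith) (by rw [hK, neg_sq]; simp only [Fintype.card_fin]; ring), hsum]
  ring

/-- Optimality for triples, Case 2: if `rᵢᵢ < 0`, `rᵢᵢrⱼⱼ − rᵢⱼ² < 0` for `i ≠ j`
and `det r < 0`, then every mixture of the three real pure states is optimally
entangled. -/
theorem rank_three_optimal_neg
    (ψ : Fin 3 → Fin 4 → ℝ) (hind : LinearIndependent ℝ ψ)
    (hunit : ∀ i, ∑ j, ψ i j ^ 2 = 1)
    (r : Matrix (Fin 3) (Fin 3) ℝ)
    (hr : ∀ i j, r i j = ψ i ⬝ᵥ (Jr *ᵥ ψ j))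
    (hdiag : ∀ i, r i i < 0)
    (hoff : ∀ i j, i ≠ j → r i i * r j j - r i j ^ 2 < 0)
    (hdet : r.det < 0) :
    ∀ p : Fin 3 → ℝ, (∀ i, 0 < p i) → ∑ i, p i = 1 →
      concurrence (∑ i, p i • pureState (ψ i)) = ∑ i, p i * |r i i| ∧
      ∑ i, p i * |r i i| = ∑ i, p i * concurrence (pureState (ψ i)) :=
  rank_three_optimal_neg_general ψ r hr hdiag hoff hdet
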